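/- Flat-space form of the main divergence identity: let F be a smooth 2-form field on ℝ⁴ that is pointwise self-dual (★F(x) = F(x) for all x) and normalized so that Σ_{a,b} F_{ab}(x)² = 2 for all x. Define j_a = Σ_b ∂_b F_{ba} and V_a = Σ_b F_{ab} j_b. Then at every point, Σ_a ∂_a V_a = Σ_a (j_a)² - (1/4) Σ_{c,a,b} (∂_c F_{ab})². -/

import Mathlib

open scoped BigOperators
open Matrix

/-- The Levi-Civita symbol on `Fin 4`: the sign of the permutation sending
`(0,1,2,3)` to `(a,b,c,d)` when the indices are pairwise distinct, `0` otherwise. -/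
noncomputable def leviCivita (a b c d : Fin 4) : ℝ :=
  if h : Function.Bijective ![a, b, c, d] then
    ((Equiv.Perm.sign (Equiv.ofBijective _ h) : ℤ) : ℝ)
  else 0

/-- The Hodge star of a 2-form (antisymmetric 4×4 matrix). -/
noncomputable def hodge (F : Matrix (Fin 4) (Fin 4) ℝ) : Matrix (Fin 4) (Fin 4) ℝ :=
  fun a b => (1 / 2) * ∑ c, ∑ d, leviCivita a b c d * F c d

/-- Partial derivative in the `a`-th coordinate direction of Euclidean `ℝ⁴`. -/
noncomputable def pd (a : Fin 4) (f : (Fin 4 → ℝ) → ℝ) (x : Fin 4 → ℝ) : ℝ :=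
  fderiv ℝ f x (Pi.single a 1)

/-- The codifferential of a 2-form field: `(d*F)_a = -Σ_b ∂_b F_{ba}`. -/
noncomputable def codiff (F : (Fin 4 → ℝ) → Matrix (Fin 4) (Fin 4) ℝ)
    (a : Fin 4) (x : Fin 4 → ℝ) : ℝ :=
  -∑ b, pd b (fun y => F y b a) x

/-- The exterior derivative of a 2-form field:
`(dF)_{abc} = ∂_a F_{bc} + ∂_b F_{ca} + ∂_c F_{ab}`. -/
noncomputable def extd2 (F : (Fin 4 → ℝ) → Matrix (Fin 4) (Fin 4) ℝ)
    (a b c : Fin 4) (x : Fin 4 → ℝ) : ℝ :=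
  pd a (fun y => F y b c) x + pd b (fun y => F y c a) x + pd c (fun y => F y a b) x

/-- The exterior derivative of a 1-form field: `(dj)_{ab} = ∂_a j_b - ∂_b j_a`. -/
noncomputable def extd1 (j : Fin 4 → (Fin 4 → ℝ) → ℝ) (a b : Fin 4) (x : Fin 4 → ℝ) : ℝ :=
  pd a (j b) x - pd b (j a) x

/-- The codifferential of a 3-form field: `(d*G)_{ab} = -Σ_c ∂_c G_{cab}`. -/
noncomputable def codiff3 (G : Fin 4 → Fin 4 → Fin 4 → (Fin 4 → ℝ) → ℝ)
    (a b : Fin 4) (x : Fin 4 → ℝ) : ℝ :=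
  -∑ c, pd c (G c a b) x

lemma contDiff_pd {f : (Fin 4 → ℝ) → ℝ} (h : ContDiff ℝ (⊤ : ℕ∞) f) (a : Fin 4) :
    ContDiff ℝ (⊤ : ℕ∞) (pd a f) :=
  (h.fderiv_right (by exact (by simp))).clm_apply contDiff_const

lemma pd_neg (a : Fin 4) (f : (Fin 4 → ℝ) → ℝ) :
    pd a (fun y => -(f y)) = fun x => -(pd a f x) := by
  funext x; simp [pd, fderiv_neg]

lemma pd_zero (a : Fin 4) : pd a (fun _ => (0:ℝ)) = fun _ => (0:ℝ) := by
  funext x; simp [pd]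

lemma pd_const (a : Fin 4) (c : ℝ) : pd a (fun _ => c) = fun _ => (0:ℝ) := by
  funext x; simp [pd]

lemma pd_sum {ι : Type*} (s : Finset ι) (f : ι → (Fin 4 → ℝ) → ℝ) (a : Fin 4) (x : Fin 4 → ℝ)
    (hf : ∀ i ∈ s, DifferentiableAt ℝ (f i) x) :
    pd a (fun y => ∑ i ∈ s, f i y) x = ∑ i ∈ s, pd a (f i) x := by
  simp only [pd]
  rw [fderiv_fun_sum hf]
  simp

lemma pd_mul {f g : (Fin 4 → ℝ) → ℝ} (a : Fin 4) (x : Fin 4 → ℝ)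
    (hf : DifferentiableAt ℝ f x) (hg : DifferentiableAt ℝ g x) :
    pd a (fun y => f y * g y) x = pd a f x * g x + f x * pd a g x := by
  simp only [pd]
  rw [fderiv_fun_mul hf hg]
  simp only [ContinuousLinearMap.add_apply, ContinuousLinearMap.smul_apply, smul_eq_mul]
  ring

lemma pd_comm {f : (Fin 4 → ℝ) → ℝ} (h : ContDiff ℝ (⊤ : ℕ∞) f) (a b : Fin 4) (x : Fin 4 → ℝ) :
    pd a (pd b f) x = pd b (pd a f) x := by
  have hsym := (h.contDiffAt (x := x)).isSymmSndFDerivAt (by rw [minSmoothness_of_isRCLikeNormedField]; exact WithTop.coe_le_coe.2 le_top)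
  have hd : DifferentiableAt ℝ (fderiv ℝ f) x :=
    ((h.fderiv_right (WithTop.coe_le_coe.2 le_top : (1 : WithTop ℕ∞) + 1 ≤ ((⊤ : ℕ∞) : WithTop ℕ∞))).differentiable one_ne_zero) x
  have key : ∀ v : Fin 4 → ℝ, ∀ w : Fin 4 → ℝ,
      pd a (fun y => fderiv ℝ f y v) x = fderiv ℝ (fderiv ℝ f) x (Pi.single a 1) v := by
    intro v w
    simp only [pd]
    rw [fderiv_clm_apply hd (differentiableAt_const v)]
    simp
  have hb : pd b f = fun y => fderiv ℝ f y (Pi.single b 1) := rfl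
  have ha : pd a f = fun y => fderiv ℝ f y (Pi.single a 1) := rfl
  simp only [pd, hb, ha]
  have h1 : fderiv ℝ (fun y => fderiv ℝ f y (Pi.single b 1)) x (Pi.single a 1)
      = fderiv ℝ (fderiv ℝ f) x (Pi.single a 1) (Pi.single b 1) := by
    rw [fderiv_clm_apply hd (differentiableAt_const _)]
    simp
  have h2 : fderiv ℝ (fun y => fderiv ℝ f y (Pi.single a 1)) x (Pi.single b 1)
      = fderiv ℝ (fderiv ℝ f) x (Pi.single b 1) (Pi.single a 1) := by
    rw [fderiv_clm_apply hd (differentiableAt_const _)]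
    simp
  rw [h1, h2]
  exact hsym.eq _ _


lemma pd_add {f g : (Fin 4 → ℝ) → ℝ} (a : Fin 4) (x : Fin 4 → ℝ)
    (hf : DifferentiableAt ℝ f x) (hg : DifferentiableAt ℝ g x) :
    pd a (fun y => f y + g y) x = pd a f x + pd a g x := by
  simp only [pd]
  rw [fderiv_fun_add hf hg]
  simp

lemma leviCivita_zero {a b c d : Fin 4} (h : ¬ Function.Bijective ![a, b, c, d]) :
    leviCivita a b c d = 0 := dif_neg h

lemma leviCivita_perm (e : Equiv.Perm (Fin 4)) :
    leviCivita (e 0) (e 1) (e 2) (e 3) = ((Equiv.Perm.sign e : ℤ) : ℝ) := by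
  have hv : ![e 0, e 1, e 2, e 3] = ⇑e := by
    funext i; fin_cases i <;> rfl
  have hb : Function.Bijective ![e 0, e 1, e 2, e 3] := hv ▸ e.bijective
  rw [leviCivita, dif_pos hb]
  have : Equiv.ofBijective _ hb = e := by
    apply Equiv.ext
    intro y
    rw [Equiv.ofBijective_apply, hv]
  rw [this]

lemma lc0123 : leviCivita 0 1 2 3 = 1 := by
  have h := leviCivita_perm ((1 : Equiv.Perm (Fin 4)))
  have e0 : ((1 : Equiv.Perm (Fin 4))) 0 = 0 := by decide
  have e1 : ((1 : Equiv.Perm (Fin 4))) 1 = 1 := by decide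
  have e2 : ((1 : Equiv.Perm (Fin 4))) 2 = 2 := by decide
  have e3 : ((1 : Equiv.Perm (Fin 4))) 3 = 3 := by decide
  have hs : Equiv.Perm.sign ((1 : Equiv.Perm (Fin 4))) = 1 := by decide
  rw [e0, e1, e2, e3, hs] at h
  simpa using h

lemma lc0132 : leviCivita 0 1 3 2 = -1 := by
  have h := leviCivita_perm (Equiv.swap (2:Fin 4) 3)
  have e0 : (Equiv.swap (2:Fin 4) 3) 0 = 0 := by decide
  have e1 : (Equiv.swap (2:Fin 4) 3) 1 = 1 := by decide
  have e2 : (Equiv.swap (2:Fin 4) 3) 2 = 3 := by decide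
  have e3 : (Equiv.swap (2:Fin 4) 3) 3 = 2 := by decide
  have hs : Equiv.Perm.sign (Equiv.swap (2:Fin 4) 3) = -1 := by decide
  rw [e0, e1, e2, e3, hs] at h
  simpa using h

lemma lc0213 : leviCivita 0 2 1 3 = -1 := by
  have h := leviCivita_perm (Equiv.swap (1:Fin 4) 2)
  have e0 : (Equiv.swap (1:Fin 4) 2) 0 = 0 := by decide
  have e1 : (Equiv.swap (1:Fin 4) 2) 1 = 2 := by decide
  have e2 : (Equiv.swap (1:Fin 4) 2) 2 = 1 := by decide
  have e3 : (Equiv.swap (1:Fin 4) 2) 3 = 3 := by decide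
  have hs : Equiv.Perm.sign (Equiv.swap (1:Fin 4) 2) = -1 := by decide
  rw [e0, e1, e2, e3, hs] at h
  simpa using h

lemma lc0231 : leviCivita 0 2 3 1 = 1 := by
  have h := leviCivita_perm (Equiv.swap (1:Fin 4) 3 * Equiv.swap (1:Fin 4) 2)
  have e0 : (Equiv.swap (1:Fin 4) 3 * Equiv.swap (1:Fin 4) 2) 0 = 0 := by decide
  have e1 : (Equiv.swap (1:Fin 4) 3 * Equiv.swap (1:Fin 4) 2) 1 = 2 := by decide
  have e2 : (Equiv.swap (1:Fin 4) 3 * Equiv.swap (1:Fin 4) 2) 2 = 3 := by decide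
  have e3 : (Equiv.swap (1:Fin 4) 3 * Equiv.swap (1:Fin 4) 2) 3 = 1 := by decide
  have hs : Equiv.Perm.sign (Equiv.swap (1:Fin 4) 3 * Equiv.swap (1:Fin 4) 2) = 1 := by decide
  rw [e0, e1, e2, e3, hs] at h
  simpa using h

lemma lc0312 : leviCivita 0 3 1 2 = 1 := by
  have h := leviCivita_perm (Equiv.swap (1:Fin 4) 2 * Equiv.swap (1:Fin 4) 3)
  have e0 : (Equiv.swap (1:Fin 4) 2 * Equiv.swap (1:Fin 4) 3) 0 = 0 := by decide
  have e1 : (Equiv.swap (1:Fin 4) 2 * Equiv.swap (1:Fin 4) 3) 1 = 3 := by decide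
  have e2 : (Equiv.swap (1:Fin 4) 2 * Equiv.swap (1:Fin 4) 3) 2 = 1 := by decide
  have e3 : (Equiv.swap (1:Fin 4) 2 * Equiv.swap (1:Fin 4) 3) 3 = 2 := by decide
  have hs : Equiv.Perm.sign (Equiv.swap (1:Fin 4) 2 * Equiv.swap (1:Fin 4) 3) = 1 := by decide
  rw [e0, e1, e2, e3, hs] at h
  simpa using h

lemma lc0321 : leviCivita 0 3 2 1 = -1 := by
  have h := leviCivita_perm (Equiv.swap (1:Fin 4) 3)
  have e0 : (Equiv.swap (1:Fin 4) 3) 0 = 0 := by decide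
  have e1 : (Equiv.swap (1:Fin 4) 3) 1 = 3 := by decide
  have e2 : (Equiv.swap (1:Fin 4) 3) 2 = 2 := by decide
  have e3 : (Equiv.swap (1:Fin 4) 3) 3 = 1 := by decide
  have hs : Equiv.Perm.sign (Equiv.swap (1:Fin 4) 3) = -1 := by decide
  rw [e0, e1, e2, e3, hs] at h
  simpa using h

/-- Flat-space form of the main divergence identity: for a smooth, pointwise
self-dual 2-form field `F` on `ℝ⁴` with `Σ_{a,b} F_{ab}² = 2`, the current
`V_a = Σ_b F_{ab} j_b` with `j_a = Σ_b ∂_b F_{ba}` satisfies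
`div V = |j|² - (1/4)|∇F|²`. -/
theorem main_divergence_identity_flat (F : (Fin 4 → ℝ) → Matrix (Fin 4) (Fin 4) ℝ)
    (hsmooth : ∀ a b, ContDiff ℝ (⊤ : ℕ∞) fun x => F x a b)
    (hanti : ∀ x, (F x)ᵀ = -(F x))
    (hsd : ∀ x, hodge (F x) = F x)
    (hnorm : ∀ x, ∑ a, ∑ b, (F x a b) ^ 2 = 2)
    (j V : Fin 4 → (Fin 4 → ℝ) → ℝ)
    (hj : ∀ a x, j a x = ∑ b, pd b (fun y => F y b a) x)
    (hV : ∀ a x, V a x = ∑ b, F x a b * j b x) :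
    ∀ x : Fin 4 → ℝ,
      ∑ a, pd a (V a) x =
        ∑ a, (j a x) ^ 2 - (1 / 4) * ∑ c, ∑ a, ∑ b, (pd c (fun y => F y a b) x) ^ 2 := by

  intro x
  -- pointwise antisymmetry
  have hM : ∀ (y : Fin 4 → ℝ) (a b : Fin 4), F y b a = -(F y a b) := by
    intro y a b
    have h := congrFun (congrFun (hanti y) a) b
    simpa [Matrix.transpose_apply, Matrix.neg_apply] using h
  -- self-duality component relations
  have q23 : ∀ y : Fin 4 → ℝ, F y 2 3 = F y 0 1 := by
    intro y
    have h := congrFun (congrFun (hsd y) 0) 1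
    simp only [hodge, Fin.sum_univ_four, show leviCivita 0 1 0 0 = 0 from leviCivita_zero (by decide), show leviCivita 0 1 0 1 = 0 from leviCivita_zero (by decide), show leviCivita 0 1 0 2 = 0 from leviCivita_zero (by decide), show leviCivita 0 1 0 3 = 0 from leviCivita_zero (by decide), show leviCivita 0 1 1 0 = 0 from leviCivita_zero (by decide), show leviCivita 0 1 1 1 = 0 from leviCivita_zero (by decide), show leviCivita 0 1 1 2 = 0 from leviCivita_zero (by decide), show leviCivita 0 1 1 3 = 0 from leviCivita_zero (by decide), show leviCivita 0 1 2 0 = 0 from leviCivita_zero (by decide), show leviCivita 0 1 2 1 = 0 from leviCivita_zero (by decide), show leviCivita 0 1 2 2 = 0 from leviCivita_zero (by decide), show leviCivita 0 1 3 0 = 0 from leviCivita_zero (by decide), show leviCivita 0 1 3 1 = 0 from leviCivita_zero (by decide), show leviCivita 0 1 3 3 = 0 from leviCivita_zero (by decide), lc0123, lc0132] at h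
    rw [hM y 2 3] at h
    linarith
  have q31 : ∀ y : Fin 4 → ℝ, F y 3 1 = F y 0 2 := by
    intro y
    have h := congrFun (congrFun (hsd y) 0) 2
    simp only [hodge, Fin.sum_univ_four, show leviCivita 0 2 0 0 = 0 from leviCivita_zero (by decide), show leviCivita 0 2 0 1 = 0 from leviCivita_zero (by decide), show leviCivita 0 2 0 2 = 0 from leviCivita_zero (by decide), show leviCivita 0 2 0 3 = 0 from leviCivita_zero (by decide), show leviCivita 0 2 1 0 = 0 from leviCivita_zero (by decide), show leviCivita 0 2 1 1 = 0 from leviCivita_zero (by decide), show leviCivita 0 2 1 2 = 0 from leviCivita_zero (by decide), show leviCivita 0 2 2 0 = 0 from leviCivita_zero (by decide), show leviCivita 0 2 2 1 = 0 from leviCivita_zero (by decide), show leviCivita 0 2 2 2 = 0 from leviCivita_zero (by decide), show leviCivita 0 2 2 3 = 0 from leviCivita_zero (by decide), show leviCivita 0 2 3 0 = 0 from leviCivita_zero (by decide), show leviCivita 0 2 3 2 = 0 from leviCivita_zero (by decide), show leviCivita 0 2 3 3 = 0 from leviCivita_zero (by decide), lc0213, lc0231] at h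
    rw [hM y 3 1] at h
    linarith
  have q12 : ∀ y : Fin 4 → ℝ, F y 1 2 = F y 0 3 := by
    intro y
    have h := congrFun (congrFun (hsd y) 0) 3
    simp only [hodge, Fin.sum_univ_four, show leviCivita 0 3 0 0 = 0 from leviCivita_zero (by decide), show leviCivita 0 3 0 1 = 0 from leviCivita_zero (by decide), show leviCivita 0 3 0 2 = 0 from leviCivita_zero (by decide), show leviCivita 0 3 0 3 = 0 from leviCivita_zero (by decide), show leviCivita 0 3 1 0 = 0 from leviCivita_zero (by decide), show leviCivita 0 3 1 1 = 0 from leviCivita_zero (by decide), show leviCivita 0 3 1 3 = 0 from leviCivita_zero (by decide), show leviCivita 0 3 2 0 = 0 from leviCivita_zero (by decide), show leviCivita 0 3 2 2 = 0 from leviCivita_zero (by decide), show leviCivita 0 3 2 3 = 0 from leviCivita_zero (by decide), show leviCivita 0 3 3 0 = 0 from leviCivita_zero (by decide), show leviCivita 0 3 3 1 = 0 from leviCivita_zero (by decide), show leviCivita 0 3 3 2 = 0 from leviCivita_zero (by decide), show leviCivita 0 3 3 3 = 0 from leviCivita_zero (by decide), lc0312, lc0321] at h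
    rw [hM y 1 2] at h
    linarith
  -- canonical pointwise component normal forms
  have q00 : ∀ y : Fin 4 → ℝ, F y 0 0 = 0 := fun y => by have := hM y 0 0; linarith
  have q11 : ∀ y : Fin 4 → ℝ, F y 1 1 = 0 := fun y => by have := hM y 1 1; linarith
  have q22 : ∀ y : Fin 4 → ℝ, F y 2 2 = 0 := fun y => by have := hM y 2 2; linarith
  have q33 : ∀ y : Fin 4 → ℝ, F y 3 3 = 0 := fun y => by have := hM y 3 3; linarith
  have q10 : ∀ y : Fin 4 → ℝ, F y 1 0 = -(F y 0 1) := fun y => hM y 0 1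
  have q20 : ∀ y : Fin 4 → ℝ, F y 2 0 = -(F y 0 2) := fun y => hM y 0 2
  have q30 : ∀ y : Fin 4 → ℝ, F y 3 0 = -(F y 0 3) := fun y => hM y 0 3
  have q32 : ∀ y : Fin 4 → ℝ, F y 3 2 = -(F y 0 1) := fun y => by
    rw [hM y 2 3, q23 y]
  have q13 : ∀ y : Fin 4 → ℝ, F y 1 3 = -(F y 0 2) := fun y => by
    rw [hM y 3 1, q31 y]
  have q21 : ∀ y : Fin 4 → ℝ, F y 2 1 = -(F y 0 3) := fun y => by
    rw [hM y 1 2, q12 y]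
  have q12' : ∀ y : Fin 4 → ℝ, F y 1 2 = F y 0 3 := q12
  -- differentiability bookkeeping
  have hsm : ∀ a b : Fin 4, ContDiff ℝ (⊤ : ℕ∞) (fun y => F y a b) := hsmooth
  have hdF : ∀ (a b : Fin 4) (y : Fin 4 → ℝ), DifferentiableAt ℝ (fun z => F z a b) y :=
    fun a b y => ((hsm a b).differentiable (by simp)) y
  have hsmP : ∀ (c a b : Fin 4), ContDiff ℝ (⊤ : ℕ∞) (pd c (fun z => F z a b)) :=
    fun c a b => contDiff_pd (hsm a b) c
  have hdP : ∀ (c a b : Fin 4) (y : Fin 4 → ℝ),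
      DifferentiableAt ℝ (pd c (fun z => F z a b)) y :=
    fun c a b y => ((hsmP c a b).differentiable (by simp)) y
  have hjfun : ∀ b : Fin 4, j b = fun y => ∑ c, pd c (fun z => F z c b) y :=
    fun b => funext (fun y => hj b y)
  have hsmj : ∀ b : Fin 4, ContDiff ℝ (⊤ : ℕ∞) (j b) := by
    intro b
    rw [hjfun b]
    exact ContDiff.sum (fun c _ => hsmP c c b)
  have hdj : ∀ (b : Fin 4) (y : Fin 4 → ℝ), DifferentiableAt ℝ (j b) y :=
    fun b y => ((hsmj b).differentiable (by simp)) y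
  have hVfun : ∀ a : Fin 4, V a = fun y => ∑ b, F y a b * j b y :=
    fun a => funext (fun y => hV a y)
  -- step 1 : expand the divergence of V
  have hVa : ∀ a : Fin 4, pd a (V a) x
      = ∑ b, (pd a (fun y => F y a b) x * j b x
          + F x a b * ∑ c, pd a (pd c (fun y => F y c b)) x) := by
    intro a
    rw [hVfun a]
    rw [pd_sum _ _ _ _ (fun b _ => (hdF a b x).fun_mul (hdj b x))]
    refine Finset.sum_congr rfl (fun b _ => ?_)
    rw [pd_mul a x (hdF a b x) (hdj b x)]
    congr 1
    congr 1
    rw [hjfun b]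
    rw [pd_sum _ _ _ _ (fun c _ => hdP c c b x)]
  -- step 2 : the |j|^2 term
  have hT1 : ∑ a, ∑ b, pd a (fun y => F y a b) x * j b x = ∑ b, (j b x) ^ 2 := by
    rw [Finset.sum_comm]
    refine Finset.sum_congr rfl (fun b _ => ?_)
    rw [← Finset.sum_mul, ← hj b x]
    ring
  -- twice-differentiated norm constraint
  have hN : ∀ c : Fin 4, ∑ a, ∑ b,
      (pd c (pd c (fun y => F y a b)) x * F x a b
        + pd c (fun y => F y a b) x * pd c (fun y => F y a b) x
        + (pd c (fun y => F y a b) x * pd c (fun y => F y a b) x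
        + F x a b * pd c (pd c (fun y => F y a b)) x)) = 0 := by
    intro c
    have hg : (fun y => ∑ a, ∑ b, F y a b * F y a b) = fun _ => (2:ℝ) := by
      funext y
      rw [← hnorm y]
      exact Finset.sum_congr rfl (fun a _ => Finset.sum_congr rfl (fun b _ => (sq (F y a b)).symm)) 
    have h2 : pd c (fun y => ∑ a, ∑ b, F y a b * F y a b)
        = fun y => ∑ a, ∑ b, (pd c (fun z => F z a b) y * F y a b
            + F y a b * pd c (fun z => F z a b) y) := by
      funext y
      rw [pd_sum _ _ _ _ (fun a _ => DifferentiableAt.fun_sum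
        (fun b _ => (hdF a b y).fun_mul (hdF a b y)))]
      refine Finset.sum_congr rfl (fun a _ => ?_)
      rw [pd_sum _ _ _ _ (fun b _ => (hdF a b y).fun_mul (hdF a b y))]
      exact Finset.sum_congr rfl (fun b _ => pd_mul c y (hdF a b y) (hdF a b y))
    have h3 : (fun y => ∑ a, ∑ b, (pd c (fun z => F z a b) y * F y a b
        + F y a b * pd c (fun z => F z a b) y)) = fun _ => (0:ℝ) := by
      rw [← h2, hg]
      exact pd_const c 2
    have h4 : pd c (fun y => ∑ a, ∑ b, (pd c (fun z => F z a b) y * F y a b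
        + F y a b * pd c (fun z => F z a b) y)) x = 0 := by
      rw [h3]
      exact congrFun (pd_zero c) x
    rw [pd_sum _ _ _ _ (fun a _ => DifferentiableAt.fun_sum (fun b _ =>
      ((hdP c a b x).fun_mul (hdF a b x)).fun_add ((hdF a b x).fun_mul (hdP c a b x)))) ] at h4
    calc ∑ a, ∑ b, (pd c (pd c (fun y => F y a b)) x * F x a b
        + pd c (fun y => F y a b) x * pd c (fun y => F y a b) x
        + (pd c (fun y => F y a b) x * pd c (fun y => F y a b) x
        + F x a b * pd c (pd c (fun y => F y a b)) x))
        = ∑ a, pd c (fun y => ∑ b, (pd c (fun z => F z a b) y * F y a b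
            + F y a b * pd c (fun z => F z a b) y)) x := by
          refine Finset.sum_congr rfl (fun a _ => ?_)
          rw [pd_sum _ _ _ _ (fun b _ =>
            ((hdP c a b x).fun_mul (hdF a b x)).fun_add ((hdF a b x).fun_mul (hdP c a b x)))]
          refine Finset.sum_congr rfl (fun b _ => ?_)
          rw [pd_add c x ((hdP c a b x).fun_mul (hdF a b x)) ((hdF a b x).fun_mul (hdP c a b x)),
            pd_mul c x (hdP c a b x) (hdF a b x), pd_mul c x (hdF a b x) (hdP c a b x)]
      _ = 0 := h4
  -- the key second-derivative term
  have hT2 : ∑ a, ∑ b, F x a b * ∑ c, pd a (pd c (fun y => F y c b)) x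
      = -(1/4) * ∑ c, ∑ a, ∑ b, (pd c (fun y => F y a b) x) ^ 2 := by
    have hN0 := hN 0
    have hN1 := hN 1
    have hN2 := hN 2
    have hN3 := hN 3
    simp only [Fin.sum_univ_four, q00, q11, q22, q33, q10, q20, q30, q32, q13, q21, q23, q31,
      q12, pd_neg, pd_zero] at hN0 hN1 hN2 hN3 ⊢
    have cl1001 : pd 1 (pd 0 (fun y => F y 0 1)) x = pd 0 (pd 1 (fun y => F y 0 1)) x := pd_comm (hsm 0 1) 1 0 x
    have cl2001 : pd 2 (pd 0 (fun y => F y 0 1)) x = pd 0 (pd 2 (fun y => F y 0 1)) x := pd_comm (hsm 0 1) 2 0 x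
    have cl3001 : pd 3 (pd 0 (fun y => F y 0 1)) x = pd 0 (pd 3 (fun y => F y 0 1)) x := pd_comm (hsm 0 1) 3 0 x
    have cl2101 : pd 2 (pd 1 (fun y => F y 0 1)) x = pd 1 (pd 2 (fun y => F y 0 1)) x := pd_comm (hsm 0 1) 2 1 x
    have cl3101 : pd 3 (pd 1 (fun y => F y 0 1)) x = pd 1 (pd 3 (fun y => F y 0 1)) x := pd_comm (hsm 0 1) 3 1 x
    have cl3201 : pd 3 (pd 2 (fun y => F y 0 1)) x = pd 2 (pd 3 (fun y => F y 0 1)) x := pd_comm (hsm 0 1) 3 2 x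
    have cl1002 : pd 1 (pd 0 (fun y => F y 0 2)) x = pd 0 (pd 1 (fun y => F y 0 2)) x := pd_comm (hsm 0 2) 1 0 x
    have cl2002 : pd 2 (pd 0 (fun y => F y 0 2)) x = pd 0 (pd 2 (fun y => F y 0 2)) x := pd_comm (hsm 0 2) 2 0 x
    have cl3002 : pd 3 (pd 0 (fun y => F y 0 2)) x = pd 0 (pd 3 (fun y => F y 0 2)) x := pd_comm (hsm 0 2) 3 0 x
    have cl2102 : pd 2 (pd 1 (fun y => F y 0 2)) x = pd 1 (pd 2 (fun y => F y 0 2)) x := pd_comm (hsm 0 2) 2 1 x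
    have cl3102 : pd 3 (pd 1 (fun y => F y 0 2)) x = pd 1 (pd 3 (fun y => F y 0 2)) x := pd_comm (hsm 0 2) 3 1 x
    have cl3202 : pd 3 (pd 2 (fun y => F y 0 2)) x = pd 2 (pd 3 (fun y => F y 0 2)) x := pd_comm (hsm 0 2) 3 2 x
    have cl1003 : pd 1 (pd 0 (fun y => F y 0 3)) x = pd 0 (pd 1 (fun y => F y 0 3)) x := pd_comm (hsm 0 3) 1 0 x
    have cl2003 : pd 2 (pd 0 (fun y => F y 0 3)) x = pd 0 (pd 2 (fun y => F y 0 3)) x := pd_comm (hsm 0 3) 2 0 x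
    have cl3003 : pd 3 (pd 0 (fun y => F y 0 3)) x = pd 0 (pd 3 (fun y => F y 0 3)) x := pd_comm (hsm 0 3) 3 0 x
    have cl2103 : pd 2 (pd 1 (fun y => F y 0 3)) x = pd 1 (pd 2 (fun y => F y 0 3)) x := pd_comm (hsm 0 3) 2 1 x
    have cl3103 : pd 3 (pd 1 (fun y => F y 0 3)) x = pd 1 (pd 3 (fun y => F y 0 3)) x := pd_comm (hsm 0 3) 3 1 x
    have cl3203 : pd 3 (pd 2 (fun y => F y 0 3)) x = pd 2 (pd 3 (fun y => F y 0 3)) x := pd_comm (hsm 0 3) 3 2 x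
    simp only [cl1001, cl2001, cl3001, cl2101, cl3101, cl3201, cl1002, cl2002, cl3002, cl2102, cl3102, cl3202, cl1003, cl2003, cl3003, cl2103, cl3103, cl3203] at hN0 hN1 hN2 hN3 ⊢
    linear_combination (1/8) * hN0 + (1/8) * hN1 + (1/8) * hN2 + (1/8) * hN3
  -- assemble
  calc ∑ a, pd a (V a) x
      = ∑ a, ∑ b, (pd a (fun y => F y a b) x * j b x
          + F x a b * ∑ c, pd a (pd c (fun y => F y c b)) x) :=
        Finset.sum_congr rfl (fun a _ => hVa a)
    _ = (∑ a, ∑ b, pd a (fun y => F y a b) x * j b x)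
        + ∑ a, ∑ b, F x a b * ∑ c, pd a (pd c (fun y => F y c b)) x := by
        simp [Finset.sum_add_distrib]
    _ = ∑ a, (j a x) ^ 2 - (1 / 4) * ∑ c, ∑ a, ∑ b, (pd c (fun y => F y a b) x) ^ 2 := by
        rw [hT1, hT2]
        ring
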